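/- arXiv:2602.02419 — 2 statements merged into one kernel-verified Lean document; each statement's English description precedes it below -/
import Mathlib

section
/- Let n ≥ 1 be a natural number, p ∈ [0,1], and let X be a random variable with the binomial distribution Bin(n,p). Fix δ ∈ (0,1). Define the one-sided Clopper–Pearson upper confidence bound p_U^δ(k) = sup{R ∈ [0,1] : F_{n,R}(k) ≥ δ} (with p_U^δ(k) = 1 for k ≥ n). Then Pr(p ≤ p_U^δ(X)) ≥ 1 − δ; that is, the upper confidence bound covers the true success probability with probability at least 1 − δ. -/
open scoped Classical BigOperators

/-- The probability mass function of the binomial distribution `Bin(n, p)` at `j`. -/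
noncomputable def binomPMF (n : ℕ) (p : ℝ) (j : ℕ) : ℝ :=
  (n.choose j : ℝ) * p ^ j * (1 - p) ^ (n - j)

/-- The cumulative distribution function of `Bin(n, p)` at `k`:
`F_{n,p}(k) = Σ_{j=0}^{min(k,n)} C(n,j) p^j (1-p)^{n-j}`. -/
noncomputable def binomCDF (n : ℕ) (p : ℝ) (k : ℕ) : ℝ :=
  ∑ j ∈ Finset.range (min k n + 1), binomPMF n p j

/-- One-sided Clopper–Pearson upper confidence bound at count `k` and level `δ`:
`sup {R ∈ [0,1] : F_{n,R}(k) ≥ δ}`. -/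
noncomputable def cpUpper (n : ℕ) (δ : ℝ) (k : ℕ) : ℝ :=
  sSup {R : ℝ | R ∈ Set.Icc (0 : ℝ) 1 ∧ δ ≤ binomCDF n R k}

/-- One-sided Clopper–Pearson lower confidence bound at count `k` and level `δ`:
`inf {R ∈ [0,1] : 1 - F_{n,R}(k-1) ≥ δ}` for `k ≥ 1`, and `0` for `k = 0`. -/
noncomputable def cpLower (n : ℕ) (δ : ℝ) : ℕ → ℝ
  | 0 => 0
  | k + 1 => sInf {R : ℝ | R ∈ Set.Icc (0 : ℝ) 1 ∧ δ ≤ 1 - binomCDF n R k}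

/-!
If `F_{n,p}(k) ≥ δ` then `p` lies in the set whose supremum is `p_U^δ(k)`, so `p ≤ p_U^δ(k)`.
Hence every count `k` at which the bound fails has `F_{n,p}(k) < δ`; if `m` is the largest such
count, all of them lie in `{0, …, m}`, so their total probability is at most `F_{n,p}(m) < δ`.
-/

open Finset

lemma binomPMF_nonneg {n : ℕ} {p : ℝ} (hp : p ∈ Set.Icc (0 : ℝ) 1) (j : ℕ) :
    0 ≤ binomPMF n p j := by
  obtain ⟨hp0, hp1⟩ := hp
  have : 0 ≤ 1 - p := sub_nonneg.mpr hp1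
  unfold binomPMF
  positivity

lemma sum_binomPMF (n : ℕ) (p : ℝ) : ∑ j ∈ range (n + 1), binomPMF n p j = 1 := by
  have h := add_pow p (1 - p) n
  rw [add_sub_cancel, one_pow] at h
  rw [h]
  refine sum_congr rfl fun j _ => ?_
  unfold binomPMF
  ring

lemma binomCDF_of_le {n k : ℕ} (p : ℝ) (hk : k ≤ n) :
    binomCDF n p k = ∑ j ∈ range (k + 1), binomPMF n p j := by
  rw [binomCDF, min_eq_left hk]

lemma le_cpUpper {n k : ℕ} {p δ : ℝ} (hp : p ∈ Set.Icc (0 : ℝ) 1)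
    (hcdf : δ ≤ binomCDF n p k) : p ≤ cpUpper n δ k :=
  le_csSup ⟨1, fun _ hR => hR.1.2⟩ ⟨hp, hcdf⟩

lemma sum_filter_partialSum_lt_le {w : ℕ → ℝ} (hw : ∀ j, 0 ≤ w j) {δ : ℝ} (hδ : 0 ≤ δ)
    (N : ℕ) : ∑ j ∈ (range N).filter (fun j => ∑ i ∈ range (j + 1), w i < δ), w j ≤ δ := by
  set T := (range N).filter (fun j => ∑ i ∈ range (j + 1), w i < δ)
  rcases T.eq_empty_or_nonempty with hT | hT
  · simpa [hT] using hδ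
  have hmax : ∑ i ∈ range (T.max' hT + 1), w i < δ := (mem_filter.mp (T.max'_mem hT)).2
  have hsub : T ⊆ range (T.max' hT + 1) := fun j hj =>
    mem_range.mpr (Nat.lt_succ_of_le (T.le_max' j hj))
  calc ∑ j ∈ T, w j ≤ ∑ i ∈ range (T.max' hT + 1), w i :=
        sum_le_sum_of_subset_of_nonneg hsub fun j _ _ => hw j
    _ ≤ δ := hmax.le

lemma one_sub_le_sum_filter_le_partialSum {w : ℕ → ℝ} (hw : ∀ j, 0 ≤ w j) {N : ℕ}
    (hsum : ∑ j ∈ range N, w j = 1) {δ : ℝ} (hδ : 0 ≤ δ) :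
    1 - δ ≤ ∑ j ∈ (range N).filter (fun j => δ ≤ ∑ i ∈ range (j + 1), w i), w j := by
  have hsplit := sum_filter_add_sum_filter_not (range N)
    (fun j => δ ≤ ∑ i ∈ range (j + 1), w i) w
  simp only [not_le] at hsplit
  linarith [sum_filter_partialSum_lt_le hw hδ N]

theorem clopperPearson_upper_coverage_general
    (n : ℕ) (p : ℝ) (hp : p ∈ Set.Icc (0 : ℝ) 1)
    (δ : ℝ) (hδ : δ ∈ Set.Ioo (0 : ℝ) 1) :
    1 - δ ≤ ∑ j ∈ Finset.range (n + 1),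
      (if p ≤ cpUpper n δ j then binomPMF n p j else 0) := by
  have hcdf : (range (n + 1)).filter (fun j => δ ≤ ∑ i ∈ range (j + 1), binomPMF n p i) =
      (range (n + 1)).filter (fun j => δ ≤ binomCDF n p j) :=
    filter_congr fun j hj => by rw [binomCDF_of_le p (Nat.lt_succ_iff.mp (mem_range.mp hj))]
  calc 1 - δ ≤ ∑ j ∈ (range (n + 1)).filter (fun j => δ ≤ binomCDF n p j), binomPMF n p j := by
        rw [← hcdf]
        exact one_sub_le_sum_filter_le_partialSum (binomPMF_nonneg hp) (sum_binomPMF n p) hδ.1.le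
    _ ≤ ∑ j ∈ (range (n + 1)).filter (fun j => p ≤ cpUpper n δ j), binomPMF n p j :=
        sum_le_sum_of_subset_of_nonneg (monotone_filter_right _ fun _ _ => le_cpUpper hp)
          fun j _ _ => binomPMF_nonneg hp j
    _ = _ := sum_filter _ _

/-- One-sided Clopper–Pearson upper bound coverage: Pr(p ≤ p_U^δ(X)) ≥ 1 - δ. -/
theorem clopperPearson_upper_coverage
    (n : ℕ) (hn : 1 ≤ n) (p : ℝ) (hp : p ∈ Set.Icc (0 : ℝ) 1)
    (δ : ℝ) (hδ : δ ∈ Set.Ioo (0 : ℝ) 1) :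
    1 - δ ≤ ∑ j ∈ Finset.range (n + 1),
      (if p ≤ cpUpper n δ j then binomPMF n p j else 0) :=
  clopperPearson_upper_coverage_general n p hp δ hδ
end

section
/- Let n ≥ 1 be a natural number, let k be a natural number with 0 ≤ k < n, and let δ ∈ (0,1). Then the Clopper–Pearson upper bound p* = p_U^δ(k) = sup{R ∈ [0,1] : F_{n,R}(k) ≥ δ} satisfies p* ∈ (0,1) and attains the nominal level exactly: F_{n,p*}(k) = δ. -/
open scoped Classical BigOperators

open Set

/-! The Clopper–Pearson bound is the supremum of the superlevel set `{R ∈ [0,1] | δ ≤ F_{n,R}(k)}`;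
since `F_{n,·}(k)` is continuous and falls from `1` at `R = 0` to `0` at `R = 1`, this set is
closed, contains its supremum, and by the intermediate value theorem the supremum is a point where
the level `δ` is hit exactly (a strictly larger level at the supremum would force a later
crossing of `δ`, i.e. a larger element of the set). -/

theorem ContinuousOn.sSup_superlevelSet_mem_Ioo_and_eq
    {α β : Type*} [ConditionallyCompleteLinearOrder α] [TopologicalSpace α] [OrderTopology α]
    [DenselyOrdered α] [LinearOrder β] [TopologicalSpace β] [OrderClosedTopology β]
    {f : α → β} {a b : α} {c : β} (hab : a ≤ b) (hf : ContinuousOn f (Icc a b))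
    (ha : c < f a) (hb : f b < c) :
    sSup {x | x ∈ Icc a b ∧ c ≤ f x} ∈ Ioo a b ∧ f (sSup {x | x ∈ Icc a b ∧ c ≤ f x}) = c := by
  set S := {x | x ∈ Icc a b ∧ c ≤ f x}
  have hS_closed : IsClosed S := hf.preimage_isClosed_of_isClosed isClosed_Icc isClosed_Ici
  have hS_bdd : BddAbove S := ⟨b, fun x hx => hx.1.2⟩
  obtain ⟨⟨has, hsb⟩, hcs⟩ : sSup S ∈ S :=
    hS_closed.csSup_mem ⟨a, ⟨le_rfl, hab⟩, ha.le⟩ hS_bdd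
  have hsb' : sSup S < b := hsb.lt_of_ne fun h => (h ▸ hb).not_ge hcs
  have hfs : f (sSup S) ≤ c := by
    by_contra! hlt
    obtain ⟨x, ⟨hsx, hxb⟩, hfx⟩ :=
      intermediate_value_Icc' hsb (hf.mono (Icc_subset_Icc has le_rfl)) ⟨hb.le, hlt.le⟩
    have hxS : x ∈ S := ⟨⟨has.trans hsx, hxb⟩, hfx.ge⟩
    have hsx' : sSup S < x := hsx.lt_of_ne fun h => by rw [h, hfx] at hlt; exact hlt.false
    exact (le_csSup hS_bdd hxS).not_gt hsx'
  have has' : a < sSup S := has.lt_of_ne fun h => (h ▸ hfs).not_gt ha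
  exact ⟨⟨has', hsb'⟩, hfs.antisymm hcs⟩

theorem continuous_binomCDF (n k : ℕ) : Continuous fun p : ℝ => binomCDF n p k :=
  continuous_finsetSum _ fun j _ => by unfold binomPMF; fun_prop

theorem binomCDF_zero (n k : ℕ) : binomCDF n 0 k = 1 := by
  rw [binomCDF, Finset.sum_eq_single 0]
  · simp [binomPMF]
  · intro j _ hj
    simp [binomPMF, zero_pow hj]
  · simp

theorem binomCDF_one_of_lt {n k : ℕ} (hk : k < n) : binomCDF n 1 k = 0 := by
  refine Finset.sum_eq_zero fun j hj => ?_
  have hjn : j < n := by rw [Finset.mem_range] at hj; omega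
  simp [binomPMF, zero_pow (Nat.sub_ne_zero_of_lt hjn)]

theorem cpUpper_attains_level_general
    (n k : ℕ) (hk : k < n) (δ : ℝ) (hδ : δ ∈ Set.Ioo (0 : ℝ) 1) :
    cpUpper n δ k ∈ Set.Ioo (0 : ℝ) 1 ∧ binomCDF n (cpUpper n δ k) k = δ :=
  (continuous_binomCDF n k).continuousOn.sSup_superlevelSet_mem_Ioo_and_eq zero_le_one
    (by rw [binomCDF_zero]; exact hδ.2) (by rw [binomCDF_one_of_lt hk]; exact hδ.1)

/-- For 0 ≤ k < n, the Clopper–Pearson upper bound p* lies in (0,1) and attains the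
nominal level exactly: F_{n,p*}(k) = δ. -/
theorem cpUpper_attains_level
    (n k : ℕ) (hn : 1 ≤ n) (hk : k < n) (δ : ℝ) (hδ : δ ∈ Set.Ioo (0 : ℝ) 1) :
    cpUpper n δ k ∈ Set.Ioo (0 : ℝ) 1 ∧ binomCDF n (cpUpper n δ k) k = δ :=
  cpUpper_attains_level_general n k hk δ hδ
end
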